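/- Let K be a field, let n ≥ 3, and let Ω and Ψ be nonscalar similarity classes of M(n,K). Then tr(ΩΨ) = { tr(ωψ) : ω ∈ Ω, ψ ∈ Ψ } equals K. -/

import Mathlib

/-!
A nonscalar matrix moves some vector off its own line, so for any indices `a ≠ b` it is conjugate
to a matrix sending `e_a` to `e_b`. With three distinct indices `a b c`, take `C ~ A` with
`C e_a = e_b` and `D ~ B` with `D e_a = e_c`. Conjugating `D` by the transvection `1 + t E`,
`E = E_ac`, changes `tr (C D)` by `t (D_cb - C_cc)`: the term quadratic in `t` is
`t² C_ca D_ca = 0`. A preliminary conjugation of `D` by `1 + E_ab` lowers `D_cb` by one, which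
makes the slope nonzero, and then every value of the trace is attained.
-/

open Matrix Module

theorem setOf_units_conj_eq_conjugatesOf {M : Type*} [Monoid M] (a : M) :
    {b | ∃ g : Mˣ, (g : M) * a * ↑g⁻¹ = b} = conjugatesOf a := by
  ext b
  exact exists_congr fun g => Units.mul_inv_eq_iff_eq_mul g

theorem isConj_one_add_mul_mul_one_sub {R : Type*} [Ring R] {e : R} (he : e * e = 0) (a : R) :
    IsConj a ((1 + e) * a * (1 - e)) := by
  have hsq : (1 + e) * (1 - e) = 1 ∧ (1 - e) * (1 + e) = 1 := by
    constructor <;> noncomm_ring <;> simp [he]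
  refine ⟨⟨1 + e, 1 - e, hsq.1, hsq.2⟩, ?_⟩
  show (1 + e) * a = (1 + e) * a * (1 - e) * (1 + e)
  rw [mul_assoc _ (1 - e), hsq.2, mul_one]

theorem Module.Basis.sumExtend_inl {K V ι : Type*} [Field K] [AddCommGroup V] [Module K V]
    {v : ι → V} (hv : LinearIndependent K v) (k : ι) :
    Basis.sumExtend hv (Sum.inl k) = v k := by
  unfold Basis.sumExtend
  simp only [Basis.reindex_apply, Basis.coe_extend]
  rfl

theorem Module.Basis.exists_apply_eq_pair {ι K V : Type*} [Fintype ι] [Field K] [AddCommGroup V]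
    [Module K V] [FiniteDimensional K V] (hι : Fintype.card ι = finrank K V) {v w : V}
    (hvw : LinearIndependent K ![v, w]) {i j : ι} (hij : i ≠ j) :
    ∃ b : Basis ι K V, b i = v ∧ b j = w := by
  let b₀ := Basis.sumExtend hvw
  have := Module.Finite.finite_basis b₀
  have := Fintype.ofFinite (Fin 2 ⊕ Basis.sumExtendIndex hvw)
  obtain ⟨g, hg⟩ := Set.MapsTo.exists_equiv_extend_of_card_eq (t := Finset.univ)
    (s := Set.range Sum.inl) (f := Sum.elim ![i, j] fun _ => i)
    (by rw [Finset.card_univ, hι, finrank_eq_card_basis b₀])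
    (fun _ _ => Finset.mem_coe.2 (Finset.mem_univ _))
    (by rintro _ ⟨k, rfl⟩ _ ⟨l, rfl⟩ h; fin_cases k <;> fin_cases l <;> simp_all [eq_comm])
  let e := g.trans (Equiv.subtypeUnivEquiv Finset.mem_univ)
  have he : ∀ k, e.symm (![i, j] k) = Sum.inl k := fun k =>
    e.symm_apply_eq.mpr (hg _ ⟨k, rfl⟩).symm
  exact ⟨b₀.reindex e, by simpa [b₀, Basis.sumExtend_inl] using congrArg b₀ (he 0),
    by simpa [b₀, Basis.sumExtend_inl] using congrArg b₀ (he 1)⟩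

section

variable {ι R K : Type*} [Fintype ι] [DecidableEq ι]

theorem exists_linearIndependent_mulVec_of_ne_smul_one [Field K] {M : Matrix ι ι K}
    (hM : ∀ c : K, M ≠ c • 1) : ∃ v, LinearIndependent K ![v, M *ᵥ v] := by
  by_contra! h
  obtain ⟨c, hc⟩ := (toLin' M).exists_eq_smul_id_of_forall_notLinearIndependent h
  apply hM c
  rw [← LinearMap.toMatrix'_toLin' M, hc, map_smul, LinearMap.toMatrix'_one]

theorem isConj_toMatrix_toLin' [CommRing R] (b : Basis ι R (ι → R)) (M : Matrix ι ι R) :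
    IsConj M (LinearMap.toMatrix b b (toLin' M)) := by
  set e := Pi.basisFun R ι
  have hM := basis_toMatrix_mul_linearMap_toMatrix_mul_basis_toMatrix e b e b (toLin' M)
  rw [LinearMap.toMatrix_eq_toMatrix', LinearMap.toMatrix'_toLin'] at hM
  refine ⟨⟨b.toMatrix e, e.toMatrix b, b.toMatrix_mul_toMatrix_flip e,
    e.toMatrix_mul_toMatrix_flip b⟩, ?_⟩
  show b.toMatrix e * M = LinearMap.toMatrix b b (toLin' M) * b.toMatrix e
  conv_lhs => rw [← hM]
  rw [← Matrix.mul_assoc, ← Matrix.mul_assoc, b.toMatrix_mul_toMatrix_flip, Matrix.one_mul]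

theorem exists_isConj_mulVec_single_eq [Field K] {M : Matrix ι ι K}
    (hM : ∀ c : K, M ≠ c • 1) {i j : ι} (hij : i ≠ j) :
    ∃ N, IsConj M N ∧ N *ᵥ Pi.single i 1 = Pi.single j 1 := by
  obtain ⟨v, hv⟩ := exists_linearIndependent_mulVec_of_ne_smul_one hM
  obtain ⟨b, hbi, hbj⟩ :=
    Basis.exists_apply_eq_pair (finrank_fintype_fun_eq_card K).symm hv hij
  refine ⟨_, isConj_toMatrix_toLin' b M, ?_⟩
  ext k
  rw [mulVec_single_one, col_apply, LinearMap.toMatrix_apply, toLin'_apply, hbi, ← hbj,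
    b.repr_self, Finsupp.single_eq_pi_single]

theorem mul_apply_of_mulVec_single_eq [Semiring R] {X Y : Matrix ι ι R} {a c : ι}
    (hY : Y *ᵥ Pi.single a 1 = Pi.single c 1) (i : ι) : (X * Y) i a = X i c := by
  rw [← col_apply (X * Y), ← mulVec_single_one, ← mulVec_mulVec, hY, mulVec_single_one,
    col_apply]

theorem apply_of_mulVec_single_eq [Semiring R] {Y : Matrix ι ι R} {a c : ι}
    (hY : Y *ᵥ Pi.single a 1 = Pi.single c 1) (i : ι) :
    Y i a = (Pi.single c 1 : ι → R) i := by
  rw [← hY, mulVec_single_one, col_apply]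

theorem exists_isConj_mulVec_single_eq_apply_ne [CommRing R] [Nontrivial R]
    {D : Matrix ι ι R} {a b c : ι} (hab : a ≠ b) (hac : a ≠ c) (hbc : b ≠ c)
    (hD : D *ᵥ Pi.single a 1 = Pi.single c 1) (x : R) :
    ∃ D', IsConj D D' ∧ D' *ᵥ Pi.single a 1 = Pi.single c 1 ∧ D' c b ≠ x := by
  by_cases hx : D c b = x
  · set F : Matrix ι ι R := single a b 1
    have hF : F * F = 0 := single_mul_single_of_ne 1 a b a hab.symm 1
    refine ⟨_, isConj_one_add_mul_mul_one_sub hF D, ?_, ?_⟩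
    · rw [← mulVec_mulVec, ← mulVec_mulVec, sub_mulVec, add_mulVec, one_mulVec, one_mulVec,
        single_mulVec_eq, Pi.single_eq_of_ne hab.symm, mul_zero, zero_smul, sub_zero, hD,
        single_mulVec_eq, Pi.single_eq_of_ne hbc, mul_zero, zero_smul, add_zero]
    · rw [show (1 + F) * D * (1 - F) = D + F * D - D * F - F * D * F by noncomm_ring]
      simp [F, hac, hac.symm, apply_of_mulVec_single_eq hD, hx]
  · exact ⟨D, IsConj.refl D, hD, hx⟩

theorem trace_mul_one_add_mul_mul_one_sub [CommRing R] (C D E : Matrix ι ι R) :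
    trace (C * ((1 + E) * D * (1 - E))) =
      trace (C * D) + (trace (C * E * D) - trace (C * D * E)) - trace (C * E * D * E) := by
  rw [show C * ((1 + E) * D * (1 - E)) = C * D + C * E * D - C * D * E - C * E * D * E by
    noncomm_ring]
  simp only [trace_add, trace_sub]
  ring

theorem exists_isConj_trace_mul_eq [Field K] {C D E : Matrix ι ι K} (hE : E * E = 0)
    (hquad : trace (C * E * D * E) = 0) (hlin : trace (C * E * D) ≠ trace (C * D * E)) (τ : K) :
    ∃ D', IsConj D D' ∧ trace (C * D') = τ := by
  set t := (τ - trace (C * D)) / (trace (C * E * D) - trace (C * D * E))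
  have htE : (t • E) * (t • E) = 0 := by rw [smul_mul_smul_comm, hE, smul_zero]
  refine ⟨_, isConj_one_add_mul_mul_one_sub htE D, ?_⟩
  rw [trace_mul_one_add_mul_mul_one_sub]
  simp only [Matrix.mul_smul, Matrix.smul_mul, trace_smul, hquad, smul_eq_mul]
  rw [← mul_sub, div_mul_cancel₀ _ (sub_ne_zero.mpr hlin)]
  ring

theorem exists_isConj_trace_mul_eq_of_mulVec_single [Field K] {C D : Matrix ι ι K} {a b c : ι}
    (hac : a ≠ c) (hbc : b ≠ c) (hC : C *ᵥ Pi.single a 1 = Pi.single b 1)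
    (hD : D *ᵥ Pi.single a 1 = Pi.single c 1) (hDC : D c b ≠ C c c) (τ : K) :
    ∃ D', IsConj D D' ∧ trace (C * D') = τ := by
  refine exists_isConj_trace_mul_eq (single_mul_single_of_ne 1 a c a hac.symm 1) ?_ ?_ τ
  · rw [trace_mul_single, mul_apply_of_mulVec_single_eq hD, mul_single_apply_same,
      apply_of_mulVec_single_eq hC, Pi.single_eq_of_ne hbc.symm]
    simp
  · rw [trace_mul_cycle, trace_mul_single, trace_mul_single, mul_apply_of_mulVec_single_eq hC,
      mul_apply_of_mulVec_single_eq hD]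
    simpa using hDC

theorem trace_mul_conjugatesOf_eq_univ [Field K] (hι : 2 < Fintype.card ι)
    {A B : Matrix ι ι K} (hA : ∀ c : K, A ≠ c • 1) (hB : ∀ c : K, B ≠ c • 1) :
    {τ | ∃ ω ∈ conjugatesOf A, ∃ ψ ∈ conjugatesOf B, trace (ω * ψ) = τ} = Set.univ := by
  obtain ⟨a, b, c, hab, hac, hbc⟩ := Fintype.two_lt_card_iff.mp hι
  obtain ⟨C, hAC, hC⟩ := exists_isConj_mulVec_single_eq hA hab
  obtain ⟨D₀, hBD₀, hD₀⟩ := exists_isConj_mulVec_single_eq hB hac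
  obtain ⟨D, hD₀D, hD, hDC⟩ :=
    exists_isConj_mulVec_single_eq_apply_ne hab hac hbc hD₀ (C c c)
  refine Set.eq_univ_of_forall fun τ => ?_
  obtain ⟨D', hDD', hτ⟩ := exists_isConj_trace_mul_eq_of_mulVec_single hac hbc hC hD hDC τ
  exact ⟨C, hAC, D', hBD₀.trans (hD₀D.trans hDD'), hτ⟩

end

/-- **Lemma (traces of products of similarity classes).** Let `K` be a field, `n ≥ 3`, and let `Ω`, `Ψ` be similarity
classes of `M(n,K)` (orbits under conjugation by `GL(n,K)`).  If `Ω` and `Ψ` are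
nonscalar, then the set of traces of products `ωψ` (`ω ∈ Ω`, `ψ ∈ Ψ`) is all of `K`. -/
theorem trace_product_nonscalar_similarity_classes
    {K : Type*} [Field K] {n : ℕ} (hn : 3 ≤ n)
    (Ω Ψ : Set (Matrix (Fin n) (Fin n) K))
    (hΩclass : ∃ A : Matrix (Fin n) (Fin n) K,
      Ω = {B | ∃ g : (Matrix (Fin n) (Fin n) K)ˣ, (g : Matrix (Fin n) (Fin n) K) * A * (↑g⁻¹ : Matrix (Fin n) (Fin n) K) = B})
    (hΨclass : ∃ A : Matrix (Fin n) (Fin n) K,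
      Ψ = {B | ∃ g : (Matrix (Fin n) (Fin n) K)ˣ, (g : Matrix (Fin n) (Fin n) K) * A * (↑g⁻¹ : Matrix (Fin n) (Fin n) K) = B})
    (hΩns : ∀ ω ∈ Ω, ∀ c : K, ω ≠ c • (1 : Matrix (Fin n) (Fin n) K))
    (hΨns : ∀ ψ ∈ Ψ, ∀ c : K, ψ ≠ c • (1 : Matrix (Fin n) (Fin n) K)) :
    {τ : K | ∃ ω ∈ Ω, ∃ ψ ∈ Ψ, (ω * ψ).trace = τ} = Set.univ := by
  obtain ⟨A, rfl⟩ := hΩclass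
  obtain ⟨B, rfl⟩ := hΨclass
  simp only [setOf_units_conj_eq_conjugatesOf] at hΩns hΨns ⊢
  exact trace_mul_conjugatesOf_eq_univ (by rw [Fintype.card_fin]; exact hn)
    (hΩns A mem_conjugatesOf_self) (hΨns B mem_conjugatesOf_self)
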